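/- arXiv:1806.11221 — 8 statements merged into one kernel-verified Lean document; each statement's English description precedes it below -/
import Mathlib

section
/- Define p_j ∈ ℤ[b] by p_1 = b, p_{j+1} = p_j^3 + b, and for k ≥ 2 set q_k = p_{k-1}^2 + p_{k-1} p_k + p_k^2 ∈ ℤ[b]. Then q_k = b^2 · s_k where s_k ∈ ℤ[b] is a monic polynomial of degree 2·3^{k-1} - 2 with s_k(0) = 3, and s_k is irreducible over ℚ. -/
open Polynomial

private noncomputable def U8 : ℕ → Polynomial ℤ
  | 0 => 1
  | n + 1 => X ^ 2 * (U8 n) ^ 3 + 1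

private noncomputable def P8 : ℕ → Polynomial ℤ := fun n => X * U8 n

private lemma P8_zero : P8 0 = X := by simp [P8, U8]

private lemma P8_succ (n : ℕ) : P8 (n + 1) = (P8 n) ^ 3 + X := by
  simp only [P8, U8]; ring

private lemma U8_monic (n : ℕ) : (U8 n).Monic := by
  induction n with
  | zero => simpa [U8] using monic_one
  | succ n ih =>
    rw [U8]
    have h1 : (X ^ 2 * (U8 n) ^ 3 : Polynomial ℤ).Monic := (monic_X_pow 2).mul (ih.pow 3)
    refine h1.add_of_left ?_
    rw [degree_one, degree_eq_natDegree h1.ne_zero]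
    have : 0 < (X ^ 2 * (U8 n) ^ 3 : Polynomial ℤ).natDegree := by
      rw [natDegree_mul (pow_ne_zero 2 (X_ne_zero (R:=ℤ))) (pow_ne_zero 3 ih.ne_zero)]
      simp [natDegree_X_pow]
    exact_mod_cast this

private lemma U8_natDegree (n : ℕ) : (U8 n).natDegree = 3 ^ n - 1 := by
  induction n with
  | zero => simp [U8]
  | succ n ih =>
    rw [U8]
    have h1 : (X ^ 2 * (U8 n) ^ 3 : Polynomial ℤ).Monic := (monic_X_pow 2).mul ((U8_monic n).pow 3)
    have hd : (X ^ 2 * (U8 n) ^ 3 : Polynomial ℤ).natDegree = 3 ^ (n + 1) - 1 := by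
      rw [natDegree_mul (pow_ne_zero 2 (X_ne_zero (R:=ℤ))) (pow_ne_zero 3 (U8_monic n).ne_zero),
        natDegree_X_pow, natDegree_pow, ih]
      have h3 : 1 ≤ 3 ^ n := Nat.one_le_pow _ _ (by norm_num)
      have : 3 ^ (n+1) = 3 * 3 ^ n := by ring
      omega
    have hpos : 0 < (X ^ 2 * (U8 n) ^ 3 : Polynomial ℤ).natDegree := by
      rw [hd]; have h3 : 3 ≤ 3 ^ (n+1) := Nat.le_self_pow (by omega) 3; omega
    rw [natDegree_add_eq_left_of_natDegree_lt (by simpa using hpos), hd]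

private lemma U8_coeff_zero (n : ℕ) : (U8 n).coeff 0 = 1 := by
  induction n with
  | zero => simp [U8]
  | succ n ih => simp [U8, coeff_add, coeff_X_pow, mul_comm, coeff_mul_X_pow']

private lemma P8_sub_mod (n : ℕ) :
    (P8 (n + 1) - P8 n).map (Int.castRingHom (ZMod 3)) = X ^ 3 ^ (n + 1) := by
  induction n with
  | zero =>
    rw [P8_succ, P8_zero]
    simp [Polynomial.map_pow]
  | succ n ih =>
    have : Fact (Nat.Prime 3) := ⟨by norm_num⟩
    have h : P8 (n + 2) - P8 (n + 1) = (P8 (n + 1)) ^ 3 - (P8 n) ^ 3 := by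
      rw [P8_succ (n+1), P8_succ n]; ring
    rw [h, Polynomial.map_sub, Polynomial.map_pow, Polynomial.map_pow,
      ← sub_pow_char (p := 3), ← Polynomial.map_sub, ih, ← pow_mul, ← pow_succ]

private lemma U8_s_mod (m : ℕ) :
    ((U8 m) ^ 2 + U8 m * U8 (m + 1) + (U8 (m + 1)) ^ 2).map (Int.castRingHom (ZMod 3)) =
      X ^ (2 * 3 ^ (m + 1) - 2) := by
  set s : Polynomial ℤ := (U8 m) ^ 2 + U8 m * U8 (m + 1) + (U8 (m + 1)) ^ 2 with hs
  have key : X ^ 2 * s = (P8 (m+1) - P8 m) ^ 2 + C 3 * (P8 m * P8 (m+1)) := by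
    have hC : (C (3:ℤ)) = (3 : Polynomial ℤ) := by norm_num
    rw [hC]; simp only [hs, P8]; ring
  have h3 : ((C (3:ℤ)) : Polynomial ℤ).map (Int.castRingHom (ZMod 3)) = 0 := by
    rw [map_C]
    have h0 : ((Int.castRingHom (ZMod 3)) 3) = 0 := by decide
    rw [h0, map_zero]
  have := congrArg (Polynomial.map (Int.castRingHom (ZMod 3))) key
  rw [Polynomial.map_add, Polynomial.map_mul, Polynomial.map_mul, Polynomial.map_pow,
    Polynomial.map_pow, P8_sub_mod, h3, zero_mul, add_zero, Polynomial.map_X, ← pow_mul] at this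
  have h2 : 3 ^ (m+1) * 2 = 2 + (2 * 3 ^ (m+1) - 2) := by
    have : 3 ≤ 3 ^ (m+1) := Nat.le_self_pow (by omega) 3
    omega
  rw [h2, pow_add] at this
  exact mul_left_cancel₀ (pow_ne_zero 2 (X_ne_zero (R := ZMod 3))) this

private noncomputable def S8 : ℕ → Polynomial ℤ :=
  fun m => (U8 m) ^ 2 + U8 m * U8 (m + 1) + (U8 (m + 1)) ^ 2

private lemma S8_eq (m : ℕ) :
    S8 m = (U8 (m+1)) ^ 2 + ((U8 m) ^ 2 + U8 m * U8 (m + 1)) := by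
  simp only [S8]; ring

private lemma S8_deg_lt (m : ℕ) :
    ((U8 m) ^ 2 + U8 m * U8 (m + 1)).degree < ((U8 (m+1)) ^ 2).degree := by
  have ha := U8_monic m
  have hb := U8_monic (m+1)
  have hda := U8_natDegree m
  have hdb := U8_natDegree (m+1)
  have hb2 : ((U8 (m+1)) ^ 2).Monic := hb.pow 2
  have h1 : 3 ^ m - 1 < 3 ^ (m+1) - 1 := by
    have : 3 ^ (m+1) = 3 * 3 ^ m := by ring
    have h3 : 1 ≤ 3 ^ m := Nat.one_le_pow _ _ (by norm_num)
    omega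
  calc ((U8 m) ^ 2 + U8 m * U8 (m + 1)).degree
      ≤ max ((U8 m) ^ 2).degree (U8 m * U8 (m + 1)).degree := degree_add_le _ _
    _ < ((U8 (m+1)) ^ 2).degree := by
        rw [degree_eq_natDegree (ha.pow 2).ne_zero, degree_eq_natDegree (ha.mul hb).ne_zero,
          degree_eq_natDegree hb2.ne_zero, natDegree_pow, natDegree_pow,
          natDegree_mul ha.ne_zero hb.ne_zero, hda, hdb]
        rw [max_lt_iff]
        constructor <;> exact_mod_cast (by omega : _)

private lemma S8_monic (m : ℕ) : (S8 m).Monic := by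
  rw [S8_eq]
  exact ((U8_monic (m+1)).pow 2).add_of_left (S8_deg_lt m)

private lemma S8_natDegree (m : ℕ) : (S8 m).natDegree = 2 * 3 ^ (m+1) - 2 := by
  rw [S8_eq, natDegree_add_eq_left_of_degree_lt (S8_deg_lt m), natDegree_pow,
    U8_natDegree]
  have : 1 ≤ 3 ^ (m+1) := Nat.one_le_pow _ _ (by norm_num)
  omega

private lemma S8_coeff_zero (m : ℕ) : (S8 m).coeff 0 = 3 := by
  have h : S8 m = U8 m * U8 m + U8 m * U8 (m+1) + U8 (m+1) * U8 (m+1) := by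
    simp only [S8]; ring
  rw [h]
  simp [coeff_add, mul_coeff_zero, U8_coeff_zero]

private lemma S8_mod (m : ℕ) :
    (S8 m).map (Int.castRingHom (ZMod 3)) = X ^ (2 * 3 ^ (m + 1) - 2) := U8_s_mod m

private lemma S8_irred (m : ℕ) : Irreducible ((S8 m).map (Int.castRingHom ℚ)) := by
  have hmonic := S8_monic m
  have hdeg := S8_natDegree m
  have hne : Ideal.span {(3:ℤ)} ≠ ⊤ := by
    rw [Ne, Ideal.span_singleton_eq_top, Int.isUnit_iff]
    norm_num
  have hEis : (S8 m).IsEisensteinAt (Ideal.span {(3:ℤ)}) := by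
    refine hmonic.isEisensteinAt_of_mem_of_notMem hne ?_ ?_
    · intro n hn
      rw [Ideal.mem_span_singleton]
      have h0 : ((S8 m).map (Int.castRingHom (ZMod 3))).coeff n = 0 := by
        rw [S8_mod, coeff_X_pow, if_neg (by omega : ¬ n = 2 * 3 ^ (m+1) - 2)]
      rw [coeff_map] at h0
      exact_mod_cast (ZMod.intCast_zmod_eq_zero_iff_dvd _ 3).mp h0
    · rw [S8_coeff_zero, Ideal.span_singleton_pow, Ideal.mem_span_singleton]
      norm_num
  have hprime : (Ideal.span {(3:ℤ)}).IsPrime :=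
    (Ideal.span_singleton_prime (by norm_num)).mpr Int.prime_three
  have hpos : 0 < (S8 m).natDegree := by
    rw [hdeg]
    have : 3 ≤ 3 ^ (m+1) := Nat.le_self_pow (by omega) 3
    omega
  have hirr : Irreducible (S8 m) := hEis.irreducible hprime hmonic.isPrimitive hpos
  have := (hmonic.irreducible_iff_irreducible_map_fraction_map (K := ℚ)).mp hirr
  rwa [algebraMap_int_eq] at this

theorem stmt_8 (p : ℕ → Polynomial ℤ)
    (h1 : p 1 = X)
    (hrec : ∀ j, 1 ≤ j → p (j + 1) = (p j) ^ 3 + X) :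
    ∀ k, 2 ≤ k → ∃ s : Polynomial ℤ,
      (p (k - 1)) ^ 2 + p (k - 1) * p k + (p k) ^ 2 = X ^ 2 * s ∧
      s.Monic ∧ s.natDegree = 2 * 3 ^ (k - 1) - 2 ∧ s.coeff 0 = 3 ∧
      Irreducible (s.map (Int.castRingHom ℚ)) := by
  have hp : ∀ j, p (j + 1) = P8 j := by
    intro j
    induction j with
    | zero => rw [h1, P8_zero]
    | succ n ih => rw [hrec (n+1) (by omega), ih, P8_succ]
  intro k hk
  obtain ⟨m, rfl⟩ : ∃ m, k = m + 2 := ⟨k - 2, by omega⟩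
  refine ⟨S8 m, ?_, S8_monic m, ?_, S8_coeff_zero m, S8_irred m⟩
  · have e1 : m + 2 - 1 = m + 1 := rfl
    rw [e1, hp m, show m + 2 = (m + 1) + 1 from rfl, hp (m+1)]
    simp only [P8, S8]
    ring
  · rw [S8_natDegree]; norm_num
end

section
/- Define p_j ∈ ℤ[b] by p_1 = b and p_{j+1} = p_j^3 + b, and q_k = p_{k-1}^2 + p_{k-1}p_k + p_k^2 for k ≥ 2. Then q_k ≡ b^{2·3^{k-1}} (mod 3). -/
open Polynomial

theorem stmt_9 (p : ℕ → Polynomial ℤ)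
    (h1 : p 1 = X)
    (hrec : ∀ j, 1 ≤ j → p (j + 1) = (p j) ^ 3 + X) :
    ∀ k, 2 ≤ k →
      ((p (k - 1)) ^ 2 + p (k - 1) * p k + (p k) ^ 2).map (Int.castRingHom (ZMod 3)) =
        X ^ (2 * 3 ^ (k - 1)) := by
  have h3 : (3 : Polynomial (ZMod 3)) = 0 := by
    exact_mod_cast CharP.cast_eq_zero (Polynomial (ZMod 3)) 3
  have key : ∀ m : ℕ, (p (m + 2)).map (Int.castRingHom (ZMod 3)) -
      (p (m + 1)).map (Int.castRingHom (ZMod 3)) = X ^ (3 ^ (m + 1)) := by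
    intro m
    induction m with
    | zero =>
      rw [hrec 1 le_rfl, h1]
      simp [Polynomial.map_add, Polynomial.map_pow]
    | succ n ih =>
      have hB : (p (n + 2)).map (Int.castRingHom (ZMod 3)) =
          ((p (n + 1)).map (Int.castRingHom (ZMod 3))) ^ 3 + X := by
        rw [hrec (n + 1) (by omega)]
        simp [Polynomial.map_add, Polynomial.map_pow]
      rw [hrec (n + 2) (by omega)]
      simp only [Polynomial.map_add, Polynomial.map_pow, Polynomial.map_X]
      have hrw : (X : Polynomial (ZMod 3)) ^ 3 ^ (n + 1 + 1) = (X ^ 3 ^ (n + 1)) ^ 3 := by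
        rw [← pow_mul, pow_succ]
      rw [hrw, ← ih, sub_pow_char]
      linear_combination -hB
  intro k hk
  obtain ⟨m, rfl⟩ : ∃ m, k = m + 2 := ⟨k - 2, by omega⟩
  have hk1 : m + 2 - 1 = m + 1 := rfl
  rw [hk1]
  simp only [Polynomial.map_add, Polynomial.map_mul, Polynomial.map_pow]
  set a := (p (m + 1)).map (Int.castRingHom (ZMod 3)) with ha
  set b := (p (m + 2)).map (Int.castRingHom (ZMod 3)) with hb
  have hsq : a ^ 2 + a * b + b ^ 2 = (b - a) ^ 2 := by
    linear_combination (a * b) * h3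
  rw [hsq, key m, ← pow_mul, mul_comm]
end

section
/- Define p_j ∈ ℤ[a] by p_2 = a and p_{j+1} = -a·p_j^2 + 2a·p_j, and set r_k = p_k - 2 for k ≥ 2. Then r_k is irreducible over ℚ. -/
open Polynomial

theorem stmt_12 (p : ℕ → Polynomial ℤ)
    (h2 : p 2 = X)
    (hrec : ∀ j, 2 ≤ j → p (j + 1) = -X * (p j) ^ 2 + 2 * X * p j) :
    ∀ k, 2 ≤ k → Irreducible ((p k - 2).map (Int.castRingHom ℚ)) := by
  -- auxiliary facts by induction
  have aux : ∀ k, 2 ≤ k → (p k).natDegree = 2 ^ (k - 1) - 1 ∧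
      ((p k).leadingCoeff = 1 ∨ (p k).leadingCoeff = -1) ∧
      (p k).map (Int.castRingHom (ZMod 2)) = X ^ (2 ^ (k - 1) - 1) ∧
      (p k).coeff 0 = 0 := by
    intro k hk
    induction k, hk using Nat.le_induction with
    | base =>
      refine ⟨by simp [h2], Or.inl (by simp [h2]), by simp [h2], by simp [h2]⟩
    | succ n hn ih =>
      obtain ⟨hdeg, hlead, hmap, hc0⟩ := ih
      have hrecn := hrec n hn
      set d : ℕ := 2 ^ (n - 1) - 1 with hd
      have hne : p n ≠ 0 := by
        intro h
        rw [h] at hlead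
        simp at hlead
      have hd1 : 1 ≤ d := by
        have h2n : 2 ^ 1 ≤ 2 ^ (n - 1) := Nat.pow_le_pow_right (by norm_num) (by omega)
        simp at h2n; omega
      have hpow : 2 ^ (n + 1 - 1) - 1 = 2 * d + 1 := by
        have h1 : 2 ^ n = 2 * 2 ^ (n - 1) := by
          rw [← pow_succ']
          congr 1
          omega
        have h2n : 2 ^ 1 ≤ 2 ^ (n - 1) := Nat.pow_le_pow_right (by norm_num) (by omega)
        simp at h2n
        simp only [Nat.add_sub_cancel, hd, h1]
        omega
      clear_value d
      have hdq : (p n).degree = (d : ℕ) := by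
        rw [degree_eq_natDegree hne, hdeg]
      have hlne : (p n).leadingCoeff ≠ 0 := leadingCoeff_ne_zero.mpr hne
      -- degree of the main term
      have hdeg1 : (-X * (p n) ^ 2 : ℤ[X]).degree = ((2 * d + 1 : ℕ) : WithBot ℕ) := by
        rw [neg_mul, degree_neg, degree_mul, degree_pow, degree_X, hdq]
        push_cast
        ring
      have hdeg2 : (2 * X * (p n) : ℤ[X]).degree = ((d + 1 : ℕ) : WithBot ℕ) := by
        rw [degree_mul, degree_mul, hdq, show (2 : ℤ[X]) = C 2 from (map_ofNat C 2).symm,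
          degree_C two_ne_zero, degree_X]
        push_cast
        ring
      have hdlt : (2 * X * (p n) : ℤ[X]).degree < (-X * (p n) ^ 2 : ℤ[X]).degree := by
        rw [hdeg1, hdeg2]
        exact_mod_cast (by omega : d + 1 < 2 * d + 1)
      have hdegsum : (p (n + 1)).degree = ((2 * d + 1 : ℕ) : WithBot ℕ) := by
        rw [hrecn, add_comm, degree_add_eq_right_of_degree_lt hdlt, hdeg1]
      refine ⟨?_, ?_, ?_, ?_⟩
      · rw [hpow]
        exact natDegree_eq_of_degree_eq_some hdegsum
      · have : (p (n + 1)).leadingCoeff = (-X * (p n) ^ 2 : ℤ[X]).leadingCoeff := by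
          rw [hrecn, add_comm]
          exact leadingCoeff_add_of_degree_lt hdlt
        rw [this, neg_mul, leadingCoeff_neg, leadingCoeff_mul, leadingCoeff_X, one_mul,
          leadingCoeff_pow]
        rcases hlead with h | h <;> simp [h]
      · rw [hrecn, hpow]
        have h2 : ((2 : ℤ[X]).map (Int.castRingHom (ZMod 2))) = 0 := by
          rw [Polynomial.map_ofNat, show (2 : (ZMod 2)[X]) = C 2 from (map_ofNat C 2).symm,
            show (2 : ZMod 2) = 0 from rfl, map_zero]
        rw [Polynomial.map_add, Polynomial.map_mul, Polynomial.map_mul, Polynomial.map_mul,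
          Polynomial.map_neg, Polynomial.map_pow, Polynomial.map_X, hmap, h2, zero_mul,
          zero_mul, add_zero, neg_mul, CharTwo.neg_eq, ← pow_mul, ← pow_succ']
        congr 1
        ring
      · rw [hrecn]
        simp [coeff_zero, mul_coeff_zero, coeff_X_zero]
  intro k hk
  obtain ⟨hdeg, hlead, hmap, hc0⟩ := aux k hk
  set d : ℕ := 2 ^ (k - 1) - 1 with hd
  have hd1 : 1 ≤ d := by
    have h2n : 2 ^ 1 ≤ 2 ^ (k - 1) := Nat.pow_le_pow_right (by norm_num) (by omega)
    simp at h2n; omega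
  clear_value d
  have h2C : (2 : ℤ[X]) = C 2 := (map_ofNat C 2).symm
  have hrd : (p k - 2).natDegree = d := by
    rw [h2C, natDegree_sub_C, hdeg]
  have hrlead : (p k - 2).leadingCoeff = (p k).leadingCoeff := by
    rw [leadingCoeff, hrd, leadingCoeff, hdeg, coeff_sub, h2C, coeff_C,
      if_neg (by omega : ¬ d = 0), sub_zero]
  -- coefficients below the degree are even
  have hcoeff : ∀ m, m < d → (2 : ℤ) ∣ (p k).coeff m := by
    intro m hm
    have : ((p k).map (Int.castRingHom (ZMod 2))).coeff m = 0 := by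
      rw [hmap, coeff_X_pow, if_neg (by omega)]
    rw [coeff_map] at this
    exact (ZMod.intCast_zmod_eq_zero_iff_dvd _ 2).mp this
  have hprim : (p k - 2).IsPrimitive := by
    intro c hc
    have hdl : c ∣ (p k - 2).leadingCoeff := by
      rw [leadingCoeff]
      exact (C_dvd_iff_dvd_coeff c _).mp hc _
    rw [hrlead] at hdl
    rcases hlead with h | h <;> rw [h] at hdl
    · exact isUnit_of_dvd_one hdl
    · exact isUnit_of_dvd_one ((dvd_neg).mp hdl)
  have hEis : (p k - 2).IsEisensteinAt (Ideal.span {(2 : ℤ)}) := by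
    constructor
    · rw [hrlead, Ideal.mem_span_singleton]
      rcases hlead with h | h <;> rw [h] <;> norm_num
    · intro m hm
      rw [hrd] at hm
      rw [Ideal.mem_span_singleton, coeff_sub, h2C, coeff_C]
      refine dvd_sub (hcoeff m hm) ?_
      split <;> norm_num
    · rw [coeff_sub, hc0, h2C, coeff_C, if_pos rfl, Ideal.span_singleton_pow,
        Ideal.mem_span_singleton]
      norm_num
  have hprime : (Ideal.span {(2 : ℤ)}).IsPrime :=
    (Ideal.span_singleton_prime two_ne_zero).mpr Int.prime_two
  have hirr : Irreducible (p k - 2) :=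
    hEis.irreducible hprime hprim (by rw [hrd]; omega)
  exact (Polynomial.IsPrimitive.Int.irreducible_iff_irreducible_map_cast hprim).mp hirr
end

section
/- Let D ≥ 2 and P_k ∈ ℤ[a] with P_1 = 1, P_{k+1} = a·P_k^D + 1. For all k ≥ 1 and m ≥ 1, P_{m+k} ≡ P_k (mod P_m^D) in ℤ[a]. -/
open Polynomial

theorem stmt_15 (D : ℕ) (hD : 2 ≤ D) (P : ℕ → Polynomial ℤ)
    (h1 : P 1 = 1)
    (hrec : ∀ k, 1 ≤ k → P (k + 1) = X * (P k) ^ D + 1) :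
    ∀ k, 1 ≤ k → ∀ m, 1 ≤ m → (P m) ^ D ∣ (P (m + k) - P k) := by
  intro k hk
  induction k with
  | zero => omega
  | succ n ih =>
    intro m hm
    rcases Nat.eq_or_lt_of_le hk with h | h
    · -- n + 1 = 1, i.e. n = 0
      have hn : n = 0 := by omega
      subst hn
      rw [hrec m hm, h1]
      simp [mul_comm]
    · have hn : 1 ≤ n := by omega
      have hd := ih hn m hm
      have : (P m) ^ D ∣ P (m + n) ^ D - P n ^ D :=
        dvd_trans hd (sub_dvd_pow_sub_pow _ _ D)
      have heq : P (m + (n + 1)) - P (n + 1) = X * (P (m + n) ^ D - P n ^ D) := by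
        rw [show m + (n + 1) = (m + n) + 1 from rfl, hrec (m + n) (by omega), hrec n hn]
        ring
      rw [heq]
      exact Dvd.dvd.mul_left this X
end

section
/- Let D ≥ 2 and P_k ∈ ℤ[a] with P_1 = 1, P_{k+1} = a·P_k^D + 1, and define R_n = ∏_{m | n} P_m^{μ(n/m)} (where μ is the Möbius function), which lies in ℤ[a]. Then for m ≠ n, the resultant of R_m and R_n equals ±1; equivalently, R_m and R_n generate the unit ideal in ℚ[a] and are coprime in ℤ[a]. -/
open Polynomial

private lemma aux16_eval (D : ℕ) (P : ℕ → Polynomial ℤ) (h1 : P 1 = 1)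
    (hrec : ∀ k, 1 ≤ k → P (k + 1) = X * (P k) ^ D + 1) :
    ∀ k, 1 ≤ k → (P k).eval 0 = 1 := by
  intro k hk
  induction k, hk using Nat.le_induction with
  | base => simp [h1]
  | succ k hk ih => rw [hrec k hk]; simp

private lemma aux16_ne (D : ℕ) (P : ℕ → Polynomial ℤ) (h1 : P 1 = 1)
    (hrec : ∀ k, 1 ≤ k → P (k + 1) = X * (P k) ^ D + 1) :
    ∀ k, 1 ≤ k → P k ≠ 0 := by
  intro k hk h0
  have := aux16_eval D P h1 hrec k hk
  rw [h0] at this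
  simp at this

private lemma aux16_shift (D : ℕ) (P : ℕ → Polynomial ℤ) (h1 : P 1 = 1)
    (hrec : ∀ k, 1 ≤ k → P (k + 1) = X * (P k) ^ D + 1) :
    ∀ k l, 1 ≤ k → 1 ≤ l → P k ^ D ∣ P (k + l) - P l := by
  intro k l hk hl
  induction l, hl using Nat.le_induction with
  | base =>
    rw [hrec k hk, h1]
    exact ⟨X, by ring⟩
  | succ l hl ih =>
    have e1 : P (k + (l + 1)) = X * (P (k + l)) ^ D + 1 := by
      have : k + (l + 1) = (k + l) + 1 := by ring
      rw [this, hrec (k + l) (by omega)]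
    rw [e1, hrec l hl]
    have e2 : X * P (k + l) ^ D + 1 - (X * P l ^ D + 1)
        = X * (P (k + l) ^ D - P l ^ D) := by ring
    rw [e2]
    exact ((ih.trans (sub_dvd_pow_sub_pow _ _ D)).mul_left X)

private lemma aux16_mod (D : ℕ) (P : ℕ → Polynomial ℤ) (h1 : P 1 = 1)
    (hrec : ∀ k, 1 ≤ k → P (k + 1) = X * (P k) ^ D + 1) :
    ∀ k q r, 1 ≤ k → 1 ≤ r → P k ^ D ∣ P (q * k + r) - P r := by
  intro k q r hk hr
  induction q with
  | zero => simp
  | succ q ih =>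
    have e : (q + 1) * k + r = k + (q * k + r) := by ring
    rw [e]
    have h2 := aux16_shift D P h1 hrec k (q * k + r) hk (by omega)
    have e2 : P (k + (q * k + r)) - P r
        = (P (k + (q * k + r)) - P (q * k + r)) + (P (q * k + r) - P r) := by ring
    rw [e2]
    exact dvd_add h2 ih

/-- `R n = ∏_{m ∣ n} P m ^ μ(n/m)`, an identity in the fraction field of `ℤ[a]`,
which asserts in particular that this product of (possibly negative) powers is
the image of the integer polynomial `R n`. -/
theorem stmt_16 (D : ℕ) (hD : 2 ≤ D) (P R : ℕ → Polynomial ℤ)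
    (h1 : P 1 = 1)
    (hrec : ∀ k, 1 ≤ k → P (k + 1) = X * (P k) ^ D + 1)
    (hR : ∀ n, 1 ≤ n →
      algebraMap (Polynomial ℤ) (FractionRing (Polynomial ℤ)) (R n) =
        ∏ m ∈ n.divisors,
          (algebraMap (Polynomial ℤ) (FractionRing (Polynomial ℤ)) (P m)) ^
            (ArithmeticFunction.moebius (n / m))) :
    ∀ m n, 1 ≤ m → 1 ≤ n → m ≠ n → IsCoprime (R m) (R n) := by
  have hinj : Function.Injective
      (algebraMap (Polynomial ℤ) (FractionRing (Polynomial ℤ))) :=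
    IsFractionRing.injective _ _
  have hPne : ∀ k, 1 ≤ k → P k ≠ 0 := aux16_ne D P h1 hrec
  have hφP : ∀ k, 1 ≤ k →
      algebraMap (Polynomial ℤ) (FractionRing (Polynomial ℤ)) (P k) ≠ 0 := by
    intro k hk h
    exact hPne k hk (hinj (h.trans (map_zero _).symm))
  -- Möbius inversion: P n = ∏_{d ∣ n} R d
  have hProd : ∀ n > 0, ∏ i ∈ n.divisors,
      (fun i => algebraMap (Polynomial ℤ) (FractionRing (Polynomial ℤ)) (R i)) i
      = algebraMap (Polynomial ℤ) (FractionRing (Polynomial ℤ)) (P n) := by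
    refine (ArithmeticFunction.prod_eq_iff_prod_pow_moebius_eq_of_nonzero
      (f := fun i => algebraMap (Polynomial ℤ) (FractionRing (Polynomial ℤ)) (R i))
      (g := fun i => algebraMap (Polynomial ℤ) (FractionRing (Polynomial ℤ)) (P i))
      ?_ ?_).mpr ?_
    · intro n hn
      rw [hR n hn]
      exact Finset.prod_ne_zero_iff.mpr fun m hm =>
        zpow_ne_zero _ (hφP m (Nat.pos_of_mem_divisors hm))
    · intro n hn
      exact hφP n hn
    · intro n hn
      rw [Nat.prod_divisorsAntidiagonal'
        (f := fun a b => (algebraMap (Polynomial ℤ) (FractionRing (Polynomial ℤ)) (P b)) ^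
          (ArithmeticFunction.moebius a))]
      exact (hR n hn).symm
  have hP : ∀ n, 1 ≤ n → P n = ∏ d ∈ n.divisors, R d := by
    intro n hn
    apply hinj
    rw [map_prod]
    exact (hProd n hn).symm
  have RdvdP : ∀ n, 1 ≤ n → R n ∣ P n := by
    intro n hn
    rw [hP n hn]
    exact Finset.dvd_prod_of_mem _ (Nat.mem_divisors_self n (by omega))
  have claim : ∀ m, 1 ≤ m → ∀ n, m < n → IsCoprime (P m) (R n) := by
    intro m
    induction m using Nat.strong_induction_on with
    | _ m IH =>
    intro hm n hn
    have hn1 : 1 ≤ n := by omega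
    have hnd : n ∈ n.divisors := Nat.mem_divisors_self n (by omega)
    set S := ∏ d ∈ n.divisors.erase n, R d with hS
    have hPn : P n = R n * S := by
      rw [hP n hn1, ← Finset.mul_prod_erase _ _ hnd]
    rcases Nat.eq_zero_or_pos (n % m) with hr | hr
    · -- m ∣ n
      have hmn : m ∣ n := Nat.dvd_of_mod_eq_zero hr
      obtain ⟨q, hqe⟩ := hmn
      cases q with
      | zero => omega
      | succ q' =>
        have hidx : q' * m + m = n := by rw [hqe]; ring
        have hdvd := aux16_mod D P h1 hrec m q' m hm hm
        rw [hidx] at hdvd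
        obtain ⟨A, hA⟩ := hdvd
        have hQS : P m ∣ S := by
          rw [hP m hm]
          refine Finset.prod_dvd_prod_of_subset _ _ R ?_
          intro d hd
          obtain ⟨hdm, hm0⟩ := Nat.mem_divisors.mp hd
          have hdn : d ∣ n := hdm.trans ⟨q' + 1, hqe⟩
          have hdl : d ≤ m := Nat.le_of_dvd (by omega) hdm
          exact Finset.mem_erase.mpr ⟨by omega, Nat.mem_divisors.mpr ⟨hdn, by omega⟩⟩
        obtain ⟨T, hT⟩ := hQS
        have hD1 : P m ^ D = P m * P m ^ (D - 1) := by
          have e : D - 1 + 1 = D := by omega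
          conv_lhs => rw [← e, pow_succ']
        have hmain : P m * (R n * T) = P m * (1 + P m ^ (D - 1) * A) := by
          linear_combination (-(R n)) * hT - hPn + hA + A * hD1
        have h5 : R n * T = 1 + P m ^ (D - 1) * A :=
          mul_left_cancel₀ (hPne m hm) hmain
        have hcop : IsCoprime (P m ^ (D - 1)) (R n) :=
          ⟨-A, T, by linear_combination h5⟩
        exact hcop.of_isCoprime_of_dvd_left (dvd_pow_self (P m) (by omega : D - 1 ≠ 0))
    · -- m ∤ n
      have hrm : n % m < m := Nat.mod_lt _ (by omega)
      have hidx : n / m * m + n % m = n := by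
        rw [Nat.mul_comm]; exact Nat.div_add_mod n m
      have hdvd := aux16_mod D P h1 hrec m (n / m) (n % m) hm hr
      rw [hidx] at hdvd
      obtain ⟨A, hA⟩ := hdvd
      obtain ⟨u, v, huv⟩ := IH (n % m) hrm hr n (by omega)
      have hcop : IsCoprime (P m ^ D) (R n) :=
        ⟨-(u * A), u * S + v, by linear_combination huv + u * hA - u * hPn⟩
      exact hcop.of_isCoprime_of_dvd_left (dvd_pow_self (P m) (by omega : D ≠ 0))
  have key : ∀ a b, 1 ≤ a → a < b → IsCoprime (R a) (R b) := fun a b ha hab =>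
    (claim a ha b hab).of_isCoprime_of_dvd_left (RdvdP a ha)
  intro m n hm hn hmn
  rcases Nat.lt_or_ge m n with h | h
  · exact key m n hm h
  · exact (key n m hn (by omega)).symm
end

section
/- Let p be prime, and let A, B ∈ ℤ[a] be monic polynomials such that: A ≡ B^N (mod p) for some N ≥ 1; the reduction of B mod p is irreducible over 𝔽_p; and p^{2·deg(B)} does not divide resultant(A, B). Then A is irreducible over ℚ. -/
open Polynomial

/-- The resultant of two integer polynomials `f` and `g`, defined (up to the usual
sign conventions) as the determinant of their Sylvester matrix: the first
`g.natDegree` rows carry the shifted coefficients of `f`, and the remaining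
`f.natDegree` rows carry the shifted coefficients of `g`. -/
noncomputable def resultantZ (f g : Polynomial ℤ) : ℤ :=
  Matrix.det (Matrix.of fun i j : Fin (f.natDegree + g.natDegree) =>
    if (i : ℕ) < g.natDegree then
      (if (i : ℕ) ≤ (j : ℕ) ∧ (j : ℕ) ≤ (i : ℕ) + f.natDegree
        then f.coeff (f.natDegree + i - j) else 0)
    else
      (if (i : ℕ) - g.natDegree ≤ (j : ℕ) ∧ (j : ℕ) ≤ (i : ℕ) - g.natDegree + g.natDegree
        then g.coeff (g.natDegree + ((i : ℕ) - g.natDegree) - j) else 0))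

/-!
If `A = F * G` with `F`, `G` monic and nonconstant, then modulo `p` both factors divide `B̄ ^ N`
(bars denote reduction mod `p`), so the irreducible `B̄` divides both, i.e. `F ≡ G ≡ 0` modulo
the ideal `(p, B)`. Hence the remainder of `A` on division by the monic `B` is `p² E`, and since
adding to `A` a multiple of `B` of degree at most `deg A` does not change the resultant,
`Res(A, B) = Res(p² E, B) = p ^ (2 deg B) Res(E, B)`. Gauss's lemma reduces irreducibility over
`ℚ` to factorizations into monic integer polynomials.
-/

/-- `resultantZ` is the determinant of the transpose of Mathlib's Sylvester matrix with rows and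
columns listed in reverse order. -/
theorem resultantZ_eq_resultant (f g : ℤ[X]) : resultantZ f g = resultant f g := by
  rw [resultantZ, resultant, ← Matrix.det_transpose, ← Matrix.det_submatrix_equiv_self Fin.revPerm]
  congr 1
  ext i j
  simp only [Matrix.of_apply, Matrix.submatrix_apply, Matrix.transpose_apply, sylvester,
    Fin.revPerm_apply, Fin.addCases, Set.mem_Icc, Fin.val_rev, Fin.val_castLT, Fin.val_subNat,
    Fin.val_cast, eq_rec_constant]
  split_ifs <;> first | rfl | omega | (congr 1; omega)

theorem Prime.dvd_of_dvd_pow_of_not_isUnit {M : Type*} [CommMonoidWithZero M] [IsCancelMulZero M]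
    {p q : M} {n : ℕ} (hp : Prime p) (hq : q ∣ p ^ n) (hu : ¬IsUnit q) : p ∣ q := by
  obtain ⟨i, -, hi⟩ := (dvd_prime_pow hp n).1 hq
  obtain _ | i := i
  · exact absurd (associated_one_iff_isUnit.1 (by simpa using hi)) hu
  · exact (dvd_pow_self p i.succ_ne_zero).trans hi.symm.dvd

namespace Polynomial

section

variable {R : Type*} [CommRing R]

theorem C_mul_dvd_mul_modByMonic {B F G : R[X]} {a b : R} (hF : C a ∣ F %ₘ B)
    (hG : C b ∣ G %ₘ B) : C (a * b) ∣ (F * G) %ₘ B := by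
  obtain ⟨x, hx⟩ := hF
  obtain ⟨y, hy⟩ := hG
  rw [mul_modByMonic, hx, hy, mul_mul_mul_comm, ← C_mul, ← smul_eq_C_mul, smul_modByMonic,
    smul_eq_C_mul]
  exact dvd_mul_right _ _

theorem pow_natDegree_dvd_resultant_of_C_dvd_modByMonic {A B : R[X]} {q : R} (hB : B.Monic)
    (hBA : B.natDegree ≤ A.natDegree) (h : C q ∣ A %ₘ B) : q ^ B.natDegree ∣ resultant A B := by
  obtain ⟨E, hE⟩ := h
  have hres := resultant_add_mul_left (A %ₘ B) B (A /ₘ B) A.natDegree B.natDegree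
    (by rw [natDegree_divByMonic A hB]; omega) le_rfl
  rw [modByMonic_add_div A B, hE, resultant_C_mul_left] at hres
  exact ⟨_, hres⟩

end

theorem C_dvd_modByMonic_of_map_dvd (p : ℕ) {B F : ℤ[X]} (hB : B.Monic)
    (h : B.map (Int.castRingHom (ZMod p)) ∣ F.map (Int.castRingHom (ZMod p))) :
    C (p : ℤ) ∣ F %ₘ B := by
  have hmap : (F %ₘ B).map (Int.castRingHom (ZMod p)) = 0 := by
    rw [map_modByMonic _ hB]
    exact (modByMonic_eq_zero_iff_dvd (hB.map _)).2 h
  rw [C_dvd_iff_dvd_coeff]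
  intro k
  rw [← ZMod.intCast_zmod_eq_zero_iff_dvd]
  simpa using congrArg (coeff · k) hmap

theorem pow_two_mul_natDegree_dvd_resultant_mul (p : ℕ) [Fact p.Prime] {B F G : ℤ[X]}
    (hB : B.Monic) (hF : F.Monic) (hG : G.Monic)
    (hBF : B.map (Int.castRingHom (ZMod p)) ∣ F.map (Int.castRingHom (ZMod p)))
    (hBG : B.map (Int.castRingHom (ZMod p)) ∣ G.map (Int.castRingHom (ZMod p))) :
    (p : ℤ) ^ (2 * B.natDegree) ∣ resultant (F * G) B := by
  have hdeg : B.natDegree ≤ (F * G).natDegree := by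
    have h := natDegree_le_of_dvd hBF (hF.map _).ne_zero
    rw [hB.natDegree_map, hF.natDegree_map] at h
    rw [hF.natDegree_mul hG]
    omega
  have hsq : C ((p : ℤ) ^ 2) ∣ (F * G) %ₘ B := by
    simpa [sq] using C_mul_dvd_mul_modByMonic (C_dvd_modByMonic_of_map_dvd p hB hBF)
      (C_dvd_modByMonic_of_map_dvd p hB hBG)
  simpa [pow_mul] using pow_natDegree_dvd_resultant_of_C_dvd_modByMonic hB hdeg hsq

end Polynomial

theorem stmt_17 (p : ℕ) (hp : p.Prime) (A B : Polynomial ℤ)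
    (hA : A.Monic) (hB : B.Monic)
    (hred : ∃ N : ℕ, 1 ≤ N ∧
      A.map (Int.castRingHom (ZMod p)) = (B.map (Int.castRingHom (ZMod p))) ^ N)
    (hBirr : Irreducible (B.map (Int.castRingHom (ZMod p))))
    (hres : ¬ ((p : ℤ) ^ (2 * B.natDegree) ∣ resultantZ A B)) :
    Irreducible (A.map (Int.castRingHom ℚ)) := by
  obtain ⟨N, hN, hAB⟩ := hred
  have : Fact p.Prime := ⟨hp⟩
  have hBdvd : ∀ F : ℤ[X], F.Monic → F.natDegree ≠ 0 →
      F.map (Int.castRingHom (ZMod p)) ∣ A.map (Int.castRingHom (ZMod p)) →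
      B.map (Int.castRingHom (ZMod p)) ∣ F.map (Int.castRingHom (ZMod p)) := by
    intro F hF hF0 hFA
    refine hBirr.prime.dvd_of_dvd_pow_of_not_isUnit (hAB ▸ hFA) fun hu => hF0 ?_
    simpa [hF.natDegree_map] using natDegree_eq_zero_of_isUnit hu
  rw [← IsPrimitive.Int.irreducible_iff_irreducible_map_cast hA.isPrimitive,
    hA.irreducible_iff_natDegree]
  refine ⟨?_, fun F G hF hG hFG => ?_⟩
  · rintro rfl
    rw [Polynomial.map_one] at hAB
    exact hBirr.not_isUnit (IsUnit.of_pow_eq_one hAB.symm (by omega))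
  · by_contra! hFG0
    apply hres
    rw [resultantZ_eq_resultant, ← hFG]
    refine pow_two_mul_natDegree_dvd_resultant_mul p hB hF hG (hBdvd F hF hFG0.1 ?_)
      (hBdvd G hG hFG0.2 ?_) <;> rw [← hFG, Polynomial.map_mul]
    exacts [dvd_mul_right _ _, dvd_mul_left _ _]
end

section
/- Let D ≥ 2 be prime and P_k ∈ ℤ[a] with P_1 = 1, P_{k+1} = a·P_k^D + 1. Define P_{k,1} := (P_k^D − P_{k−1}^D)/(P_k − P_{k−1}) = Σ_{i+j=D−1} P_k^i P_{k−1}^j ∈ ℤ[a] for k ≥ 2. Then P_{k,1} is monic of degree (D−1)·N_{k−1} with constant coefficient D, and P_{k,1} ≡ a^{(D−1)N_{k−1}} (mod D); consequently P_{k,1} is irreducible over ℚ by the Eisenstein criterion. -/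
open Polynomial

private def geomS (D m : ℕ) : ℕ := ∑ i ∈ Finset.range m, D ^ i

private lemma geomS_succ (D m : ℕ) :
    geomS D (m + 1) = D * geomS D m + 1 := by
  unfold geomS
  rw [Finset.sum_range_succ']
  simp [Finset.mul_sum, pow_succ, mul_comm]

private lemma geomS_div {D : ℕ} (hD : 2 ≤ D) (m : ℕ) :
    (D ^ m - 1) / (D - 1) = geomS D m := by
  obtain ⟨d, rfl⟩ : ∃ d, D = d + 1 := ⟨D - 1, by omega⟩
  have key : ∀ n, d * geomS (d + 1) n + 1 = (d + 1) ^ n := by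
    intro n
    induction n with
    | zero => simp [geomS]
    | succ n ih =>
      unfold geomS
      rw [Finset.sum_range_succ, Nat.mul_add, pow_succ]
      unfold geomS at ih
      nlinarith [ih]
  have h1 : d * geomS (d + 1) m = (d + 1) ^ m - 1 := by
    have := key m; omega
  simp only [Nat.add_sub_cancel]
  rw [← h1, Nat.mul_div_cancel_left _ (by omega)]

private lemma geomS_pos {D : ℕ} (hD : 2 ≤ D) {m : ℕ} (hm : 1 ≤ m) :
    1 ≤ geomS D m := by
  obtain ⟨n, rfl⟩ : ∃ n, m = n + 1 := ⟨m - 1, by omega⟩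
  rw [geomS_succ]; omega

private lemma geomS_lt_succ {D : ℕ} (hD : 2 ≤ D) (m : ℕ) :
    geomS D m < geomS D (m + 1) := by
  unfold geomS
  rw [Finset.sum_range_succ]
  have : 1 ≤ D ^ m := Nat.one_le_pow _ _ (by omega)
  omega

theorem stmt_18 (D : ℕ) (hD : D.Prime) (P : ℕ → Polynomial ℤ)
    (h1 : P 1 = 1)
    (hrec : ∀ k, 1 ≤ k → P (k + 1) = X * (P k) ^ D + 1) :
    ∀ k, 2 ≤ k →
      ∀ Pk1 : Polynomial ℤ,
        Pk1 = ∑ i ∈ Finset.range D, (P k) ^ i * (P (k - 1)) ^ (D - 1 - i) →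
        (P k - P (k - 1)) * Pk1 = (P k) ^ D - (P (k - 1)) ^ D ∧
        Pk1.Monic ∧
        Pk1.natDegree = (D - 1) * ((D ^ (k - 1) - 1) / (D - 1)) ∧
        Pk1.coeff 0 = (D : ℤ) ∧
        Pk1.map (Int.castRingHom (ZMod D)) =
          X ^ ((D - 1) * ((D ^ (k - 1) - 1) / (D - 1))) ∧
        Irreducible (Pk1.map (Int.castRingHom ℚ)) := by
  intro k hk Pk1 hPk1
  haveI : Fact D.Prime := ⟨hD⟩
  have hD2 : 2 ≤ D := hD.two_le
  have hdiv : (D ^ (k - 1) - 1) / (D - 1) = geomS D (k - 1) := geomS_div hD2 _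
  -- basic facts about P j
  have A : ∀ j, 1 ≤ j →
      (P j).Monic ∧ (P j).natDegree = geomS D (j - 1) ∧ (P j).eval 0 = 1 := by
    intro j hj
    induction j, hj using Nat.le_induction with
    | base => rw [h1]; exact ⟨monic_one, by simp [geomS], by simp⟩
    | succ n hn ih =>
      obtain ⟨hm, hd, he⟩ := ih
      have hg : (X * (P n) ^ D).Monic := monic_X.mul (hm.pow D)
      have hgd : (X * (P n) ^ D).natDegree = geomS D n := by
        rw [monic_X.natDegree_mul (hm.pow D), natDegree_X, hm.natDegree_pow, hd]
        obtain ⟨m, rfl⟩ : ∃ m, n = m + 1 := ⟨n - 1, by omega⟩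
        simp only [Nat.add_sub_cancel]
        rw [geomS_succ]; omega
      have hSn : 1 ≤ geomS D n := geomS_pos hD2 hn
      have hlt : (1 : Polynomial ℤ).degree < (X * (P n) ^ D).degree := by
        rw [degree_one, degree_eq_natDegree hg.ne_zero, hgd]
        exact_mod_cast hSn
      refine ⟨?_, ?_, ?_⟩
      · rw [hrec n hn]; exact hg.add_of_left hlt
      · rw [hrec n hn]
        simp only [Nat.add_sub_cancel]
        rw [natDegree_eq_of_degree_eq (degree_add_eq_left_of_degree_lt hlt), hgd]
      · rw [hrec n hn]; simp
  obtain ⟨hmk, hdk, hek⟩ := A k (by omega)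
  obtain ⟨hmk', hdk', hek'⟩ := A (k - 1) (by omega)
  have hkk : k - 1 - 1 = k - 2 := by omega
  rw [hkk] at hdk'
  have hSlt : geomS D (k - 2) < geomS D (k - 1) := by
    have := geomS_lt_succ hD2 (k - 2)
    have h2 : k - 2 + 1 = k - 1 := by omega
    rwa [h2] at this
  have hSpos : 1 ≤ geomS D (k - 1) := geomS_pos hD2 (by omega)
  -- part 1 : the product identity
  have part1 : (P k - P (k - 1)) * Pk1 = (P k) ^ D - (P (k - 1)) ^ D := by
    rw [hPk1, mul_comm]; exact geom_sum₂_mul _ _ D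
  -- monicity and degree of P k - P (k-1)
  have hdeglt : (P (k - 1)).degree < (P k).degree :=
    degree_lt_degree (by rw [hdk, hdk']; exact hSlt)
  have hsub_m : (P k - P (k - 1)).Monic := hmk.sub_of_left hdeglt
  have hsub_d : (P k - P (k - 1)).natDegree = geomS D (k - 1) := by
    rw [natDegree_sub_eq_left_of_natDegree_lt (by rw [hdk, hdk']; exact hSlt), hdk]
  -- monicity and degree of P k ^ D - P (k-1) ^ D
  have hpowlt : ((P (k - 1)) ^ D).natDegree < ((P k) ^ D).natDegree := by
    rw [hmk.natDegree_pow, hmk'.natDegree_pow, hdk, hdk']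
    exact mul_lt_mul_of_pos_left hSlt (by omega)
  have hpow_m : ((P k) ^ D - (P (k - 1)) ^ D).Monic :=
    (hmk.pow D).sub_of_left (degree_lt_degree hpowlt)
  have hpow_d : ((P k) ^ D - (P (k - 1)) ^ D).natDegree = D * geomS D (k - 1) := by
    rw [natDegree_sub_eq_left_of_natDegree_lt hpowlt, hmk.natDegree_pow, hdk]
  -- Pk1 monic
  have hP1ne : Pk1 ≠ 0 := by
    intro h
    rw [h, mul_zero] at part1
    exact hpow_m.ne_zero part1.symm
  have hmonic : Pk1.Monic := by
    have := leadingCoeff_mul (P k - P (k - 1)) Pk1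
    rw [part1, hpow_m.leadingCoeff, hsub_m.leadingCoeff, one_mul] at this
    exact this.symm
  -- degree of Pk1
  have hdeg : Pk1.natDegree = (D - 1) * geomS D (k - 1) := by
    have h1' : (P k - P (k - 1)).natDegree + Pk1.natDegree
        = ((P k) ^ D - (P (k - 1)) ^ D).natDegree := by
      rw [← part1, natDegree_mul hsub_m.ne_zero hP1ne]
    rw [hsub_d, hpow_d] at h1'
    have h2 : (D - 1) * geomS D (k - 1) = D * geomS D (k - 1) - geomS D (k - 1) := by
      rw [Nat.sub_one_mul]
    have h3 : geomS D (k - 1) ≤ D * geomS D (k - 1) :=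
      Nat.le_mul_of_pos_left _ (by omega)
    omega
  -- constant coefficient
  have hcoeff0 : Pk1.coeff 0 = (D : ℤ) := by
    rw [hPk1, coeff_zero_eq_eval_zero, eval_finset_sum]
    simp [hek, hek']
  -- mod D computation
  set φ : ℤ →+* ZMod D := Int.castRingHom (ZMod D) with hφ
  have B : ∀ j, 2 ≤ j → (P j).map φ - (P (j - 1)).map φ = X ^ geomS D (j - 1) := by
    intro j hj
    induction j, hj using Nat.le_induction with
    | base =>
      show (P 2).map φ - (P 1).map φ = X ^ geomS D 1
      have hg1 : geomS D 1 = 1 := by simp [geomS]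
      rw [hrec 1 le_rfl, h1, hg1]
      simp
    | succ n hn ih =>
      have hn1 : P n = X * (P (n - 1)) ^ D + 1 := by
        have := hrec (n - 1) (by omega)
        rwa [Nat.sub_add_cancel (by omega)] at this
      simp only [Nat.add_sub_cancel]
      have key : (P (n + 1)).map φ - (P n).map φ
          = X * ((P n).map φ - (P (n - 1)).map φ) ^ D := by
        rw [sub_pow_char, hrec n (by omega), hn1]
        simp only [Polynomial.map_add, Polynomial.map_mul, Polynomial.map_pow,
          Polynomial.map_one, Polynomial.map_X]
        ring
      rw [key, ih, ← pow_mul]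
      obtain ⟨m, hm⟩ : ∃ m, n = m + 1 := ⟨n - 1, by omega⟩
      subst hm
      simp only [Nat.add_sub_cancel]
      rw [geomS_succ, ← pow_succ']
      ring_nf
  have hBk := B k hk
  have hmap : Pk1.map φ = X ^ ((D - 1) * geomS D (k - 1)) := by
    have hmul : (X ^ geomS D (k - 1)) * Pk1.map φ = X ^ (geomS D (k - 1) * D) := by
      have h := congrArg (Polynomial.map φ) part1
      simp only [Polynomial.map_mul, Polynomial.map_sub, Polynomial.map_pow] at h
      rw [hBk] at h
      rw [h, ← sub_pow_char, hBk, ← pow_mul]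
    have hexp : geomS D (k - 1) * D = geomS D (k - 1) + (D - 1) * geomS D (k - 1) := by
      have h2 : (D - 1) * geomS D (k - 1) = D * geomS D (k - 1) - geomS D (k - 1) := by
        rw [Nat.sub_one_mul]
      have h3 : geomS D (k - 1) ≤ D * geomS D (k - 1) :=
        Nat.le_mul_of_pos_left _ (by omega)
      have h4 : geomS D (k - 1) * D = D * geomS D (k - 1) := mul_comm _ _
      omega
    rw [hexp, pow_add] at hmul
    exact mul_left_cancel₀ (pow_ne_zero _ X_ne_zero) hmul
  -- Eisenstein
  have hDprime : Prime (D : ℤ) := Nat.prime_iff_prime_int.mp hD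
  set 𝓟 : Ideal ℤ := Ideal.span {(D : ℤ)} with h𝓟
  have hprime : 𝓟.IsPrime := (Ideal.span_singleton_prime hDprime.ne_zero).mpr hDprime
  have heis : Pk1.IsEisensteinAt 𝓟 := by
    refine ⟨?_, ?_, ?_⟩
    · rw [hmonic.leadingCoeff, h𝓟, Ideal.mem_span_singleton]
      intro h
      exact hDprime.not_unit (isUnit_of_dvd_one h)
    · intro n hn
      rw [h𝓟, Ideal.mem_span_singleton]
      rw [← ZMod.intCast_zmod_eq_zero_iff_dvd]
      have hc : (Pk1.map φ).coeff n = (Pk1.coeff n : ZMod D) := by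
        rw [coeff_map]; rfl
      rw [← hc, hmap, coeff_X_pow, if_neg]
      rw [hdeg] at hn
      omega
    · rw [hcoeff0, h𝓟, Ideal.span_singleton_pow, Ideal.mem_span_singleton]
      intro h
      have h1' : (D : ℤ) ^ 2 ≤ (D : ℤ) := Int.le_of_dvd (by positivity) h
      have h2 : (2 : ℤ) ≤ (D : ℤ) := by exact_mod_cast hD2
      nlinarith
  have hirr : Irreducible Pk1 := by
    refine heis.irreducible hprime hmonic.isPrimitive ?_
    rw [hdeg]
    exact Nat.mul_pos (by omega) hSpos
  exact ⟨part1, hmonic, by rw [hdiv]; exact hdeg, hcoeff0,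
    by rw [hdiv]; exact hmap,
    (IsPrimitive.Int.irreducible_iff_irreducible_map_cast hmonic.isPrimitive).mp hirr⟩
end

section
/- Let D = p^e be a prime power, and in 𝔽_p[a] define P_n = Σ_{k=0}^{n-1} a^{N_k} with N_k = (D^k − 1)/(D − 1). If α ∈ 𝔽̄_p is a root of P_n, then α^{N_n} = 1 and α^{D^n} = α (so α is a periodic point of the Frobenius x ↦ x^p with period dividing n·e). -/
open Polynomial

theorem stmt_19 (q e D n : ℕ) [Fact q.Prime] (he : 1 ≤ e) (hD : D = q ^ e)
    (hn : 1 ≤ n)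
    (N : ℕ → ℕ) (hN : ∀ k, N k = (D ^ k - 1) / (D - 1))
    (Pn : Polynomial (ZMod q)) (hPn : Pn = ∑ k ∈ Finset.range n, X ^ (N k))
    (α : AlgebraicClosure (ZMod q)) (hα : (Polynomial.aeval α) Pn = 0) :
    α ^ (N n) = 1 ∧ α ^ (D ^ n) = α := by
  have hq : 2 ≤ q := (Fact.out : q.Prime).two_le
  have hD2 : 2 ≤ D := by
    rw [hD]
    calc 2 = 2 ^ 1 := rfl
    _ ≤ q ^ e := Nat.pow_le_pow_left hq 1 |>.trans (Nat.pow_le_pow_right (by omega) he)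
  have hdvd : ∀ k, (D - 1) * N k = D ^ k - 1 := by
    intro k
    rw [hN k]
    exact Nat.mul_div_cancel' (by simpa using Nat.sub_dvd_pow_sub_pow D 1 k)
  have hN0 : N 0 = 0 := by
    have := hdvd 0; simp at this; omega
  have hNpos : ∀ k, 1 ≤ k → 1 ≤ N k := by
    intro k hk
    have := hdvd k
    have : 1 ≤ D ^ k - 1 := by
      have : D ≤ D ^ k := Nat.le_self_pow (by omega) D
      omega
    nlinarith [hdvd k]
  have hNsucc : ∀ k, N (k + 1) = 1 + D * N k := by
    intro k
    have hDk : 1 ≤ D ^ k := Nat.one_le_pow _ _ (by omega)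
    have hDk1 : 1 ≤ D ^ (k + 1) := Nat.one_le_pow _ _ (by omega)
    have h1' : ((D : ℤ) - 1) * N (k + 1) = (D : ℤ) ^ (k + 1) - 1 := by
      have := congrArg (Nat.cast : ℕ → ℤ) (hdvd (k + 1))
      push_cast [Nat.cast_sub hDk1, Nat.cast_sub (show 1 ≤ D by omega)] at this
      linarith
    have h2' : ((D : ℤ) - 1) * N k = (D : ℤ) ^ k - 1 := by
      have := congrArg (Nat.cast : ℕ → ℤ) (hdvd k)
      push_cast [Nat.cast_sub hDk, Nat.cast_sub (show 1 ≤ D by omega)] at this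
      linarith
    have hD1 : (D : ℤ) - 1 ≠ 0 := by
      have : (2 : ℤ) ≤ (D : ℤ) := by exact_mod_cast hD2
      omega
    have hc : ((D : ℤ) - 1) * (N (k + 1) : ℤ) = ((D : ℤ) - 1) * (1 + D * N k) := by
      linear_combination h1' - (D : ℤ) * h2'
    exact_mod_cast mul_left_cancel₀ hD1 hc
  have hDn : D ^ n = 1 + (D - 1) * N n := by
    have := hdvd n
    have hDk : 1 ≤ D ^ n := Nat.one_le_pow _ _ (by omega)
    omega
  -- the root sum
  have hsum : ∑ k ∈ Finset.range n, α ^ (N k) = 0 := by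
    simpa [hPn, map_sum] using hα
  have hα0 : α ≠ 0 := by
    intro h0
    rw [h0] at hsum
    rw [Finset.sum_eq_single 0] at hsum
    · simp [hN0] at hsum
    · intro k hk hk0
      rw [zero_pow]
      exact Nat.one_le_iff_ne_zero.mp (hNpos k (by omega))
    · intro h; exact absurd (Finset.mem_range.mpr hn) h
  -- Frobenius
  have hfrob : (∑ k ∈ Finset.range n, α ^ (N k)) ^ D = ∑ k ∈ Finset.range n, (α ^ (N k)) ^ D := by
    rw [hD]
    exact sum_pow_char_pow q e (Finset.range n) (fun k => α ^ N k)
  have key : α ^ (N n) = 1 := by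
    have h1 : α * (∑ k ∈ Finset.range n, (α ^ (N k)) ^ D) = 0 := by
      rw [← hfrob, hsum, zero_pow (by omega), mul_zero]
    have h2 : α * (∑ k ∈ Finset.range n, (α ^ (N k)) ^ D)
        = ∑ k ∈ Finset.range n, α ^ (N (k + 1)) := by
      rw [Finset.mul_sum]
      refine Finset.sum_congr rfl fun k _ => ?_
      rw [hNsucc k, ← pow_mul, pow_add, pow_one, mul_comm (N k) D]
    have h3 : ∑ k ∈ Finset.range n, α ^ (N (k + 1))
        = ∑ k ∈ Finset.range (n + 1), α ^ (N k) - α ^ (N 0) := by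
      rw [Finset.sum_range_succ']; ring
    have h4 : ∑ k ∈ Finset.range (n + 1), α ^ (N k)
        = ∑ k ∈ Finset.range n, α ^ (N k) + α ^ (N n) := Finset.sum_range_succ _ _
    rw [h2, h3, h4, hsum, hN0] at h1
    simp only [pow_zero] at h1
    linear_combination h1
  refine ⟨key, ?_⟩
  rw [hDn, pow_add, pow_one, pow_mul', key, one_pow, mul_one]
end
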